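/- Fix n ∈ ℕ, a tetra-closed set G of triples of Fin n, and a threshold t ∈ ℕ with n > 4 + 4t. Suppose that (i) the t-bad edges are pairwise vertex-disjoint (no two distinct t-bad edges share a vertex), and (ii) every edge of Fin n is contained in at least one triple of G. Then G contains all triples of Fin n. -/

import Mathlib

/-!
Let `f` be a triple. If its three edges are `t`-good, each has at most `t` bad apexes, so
since `n > 3 + 3t` some vertex `d ∉ f` forms good triples with all three edges, and
tetra-closedness of `f ∪ {d}` makes `f` good.

Otherwise `f = e ∪ {w}` with `e` a `t`-bad edge. By the covering hypothesis `e ∪ {d}` is good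
for some `d`, and the four edges joining `e` to `w` and to `d` are `t`-good, as they meet the
`t`-bad edge `e`. Since `n > 4 + 4t` there is a vertex `x` outside `e ∪ {w, d}` that forms good
triples with all four of them. Tetra-closedness of `e ∪ {d, x}` makes `e ∪ {x}` good, and then
tetra-closedness of `e ∪ {w, x}` makes `f` good.
-/

/-- A set `G` of triples of `Fin n` is tetra-closed if for every 4-element
subset `s` of `Fin n`, whenever three of the four 3-element subsets of `s`
belong to `G`, so does the fourth. -/
def TetraClosed {n : ℕ} (G : Finset (Finset (Fin n))) : Prop :=
  ∀ s : Finset (Fin n), s.card = 4 →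
    ∀ f ∈ s.powersetCard 3, (∀ g ∈ s.powersetCard 3, g ≠ f → g ∈ G) → f ∈ G

/-- The bad triples (triples of `Fin n` not in `G`) containing the edge `e`. -/
def badTriplesOn {n : ℕ} (G : Finset (Finset (Fin n))) (e : Finset (Fin n)) :
    Finset (Finset (Fin n)) :=
  ((Finset.univ : Finset (Fin n)).powersetCard 3).filter (fun f => e ⊆ f ∧ f ∉ G)

/-- The `t`-bad edges: the 2-element subsets of `Fin n` contained in more than
`t` bad triples. -/
def tBadEdges {n : ℕ} (G : Finset (Finset (Fin n))) (t : ℕ) :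
    Finset (Finset (Fin n)) :=
  ((Finset.univ : Finset (Fin n)).powersetCard 2).filter
    (fun e => t < (badTriplesOn G e).card)

open Finset

theorem eq_or_eq_pair_of_subset_insert {α : Type*} [DecidableEq α] {e e' : Finset α} {a : α}
    (he : e.card = 2) (he' : e'.card = 2) (hsub : e' ⊆ insert a e) :
    e' = e ∨ ∃ y ∈ e, e' = {a, y} := by
  by_cases hae' : a ∈ e'
  · obtain ⟨y, hy⟩ := card_eq_one.1 (show (e'.erase a).card = 1 by
      rw [card_erase_of_mem hae', he'])
    have hye : y ∈ e := subset_insert_iff.1 hsub (hy ▸ mem_singleton_self y)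
    exact Or.inr ⟨y, hye, by rw [← insert_erase hae', hy]⟩
  · exact Or.inl (eq_of_subset_of_card_le ((subset_insert_iff_of_notMem hae').1 hsub)
      (by rw [he, he']))

namespace TetraClosed

variable {n : ℕ} {G : Finset (Finset (Fin n))}

theorem mem_of_forall_insert_mem (hG : TetraClosed G) {f : Finset (Fin n)} {d : Fin n}
    (hf : f.card = 3) (hd : d ∉ f) (h : ∀ e ⊆ f, e.card = 2 → insert d e ∈ G) : f ∈ G := by
  refine hG (insert d f) (by rw [card_insert_of_notMem hd, hf]) f
    (mem_powersetCard.2 ⟨subset_insert _ _, hf⟩) fun g hg hgf => ?_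
  rw [mem_powersetCard] at hg
  have hdg : d ∈ g := by
    by_contra hdg
    exact hgf (eq_of_subset_of_card_le ((subset_insert_iff_of_notMem hdg).1 hg.1)
      (by rw [hf, hg.2]))
  rw [← insert_erase hdg]
  exact h _ (subset_insert_iff.1 hg.1) (by rw [card_erase_of_mem hdg, hg.2])

theorem insert_mem (hG : TetraClosed G) {e : Finset (Fin n)} {a d : Fin n} (he : e.card = 2)
    (ha : a ∉ e) (hd : d ∉ insert a e) (h₀ : insert d e ∈ G)
    (h : ∀ y ∈ e, insert d {a, y} ∈ G) : insert a e ∈ G := by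
  refine hG.mem_of_forall_insert_mem (by rw [card_insert_of_notMem ha, he]) hd
    fun e' hsub he' => ?_
  obtain rfl | ⟨y, hy, rfl⟩ := eq_or_eq_pair_of_subset_insert he he' hsub
  exacts [h₀, h y hy]

end TetraClosed

section Apexes

variable {n : ℕ} {G : Finset (Finset (Fin n))}

def badApexes (G : Finset (Finset (Fin n))) (e : Finset (Fin n)) : Finset (Fin n) :=
  univ.filter fun x => x ∉ e ∧ insert x e ∉ G

theorem insert_mem_of_notMem_badApexes {e : Finset (Fin n)} {x : Fin n}
    (hx : x ∉ badApexes G e) (hxe : x ∉ e) : insert x e ∈ G := by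
  by_contra h
  exact hx (mem_filter.2 ⟨mem_univ x, hxe, h⟩)

theorem card_badApexes_le {t : ℕ} {e : Finset (Fin n)} (he : e.card = 2)
    (hgood : e ∉ tBadEdges G t) : (badApexes G e).card ≤ t := by
  have hmaps : Set.MapsTo (insert · e) (badApexes G e) (badTriplesOn G e) := by
    intro x hx
    obtain ⟨-, hxe, hxG⟩ := mem_filter.1 hx
    refine mem_filter.2 ⟨mem_powersetCard.2 ⟨subset_univ _, ?_⟩, subset_insert _ _, hxG⟩
    rw [card_insert_of_notMem hxe, he]
  have hinj : Set.InjOn (insert · e) (badApexes G e) := fun x hx _ _ hxy =>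
    (insert_inj (mem_filter.1 hx).2.1).1 hxy
  have hgood' : (badTriplesOn G e).card ≤ t := by
    simpa [tBadEdges, he] using hgood
  exact (card_le_card_of_injOn _ hmaps hinj).trans hgood'

theorem exists_apex_of_card_lt {t : ℕ} (S : Finset (Fin n)) (E : Finset (Finset (Fin n)))
    (hE : ∀ e ∈ E, (badApexes G e).card ≤ t) (hcard : S.card + E.card * t < n) :
    ∃ x ∉ S, ∀ e ∈ E, x ∉ e → insert x e ∈ G := by
  have hlt : (S ∪ E.biUnion (badApexes G)).card < (univ : Finset (Fin n)).card := by
    rw [card_univ, Fintype.card_fin]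
    exact (card_union_le _ _).trans_lt
      ((Nat.add_le_add_left (card_biUnion_le_card_mul _ _ _ hE) _).trans_lt hcard)
  obtain ⟨x, -, hx⟩ := not_subset.1 fun h => (card_le_card h).not_gt hlt
  rw [mem_union, not_or, mem_biUnion, not_exists] at hx
  exact ⟨x, hx.1, fun e he => insert_mem_of_notMem_badApexes fun h => hx.2 e ⟨he, h⟩⟩

theorem pair_notMem_tBadEdges {t : ℕ}
    (hdisj : ∀ e₁ ∈ tBadEdges G t, ∀ e₂ ∈ tBadEdges G t, e₁ ≠ e₂ → Disjoint e₁ e₂)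
    {e : Finset (Fin n)} (hbad : e ∈ tBadEdges G t) {y z : Fin n} (hy : y ∈ e) (hz : z ∉ e) :
    {z, y} ∉ tBadEdges G t := fun h =>
  disjoint_left.1 (hdisj e hbad _ h fun hez => hz (hez ▸ mem_insert_self z {y})) hy
    (mem_insert_of_mem (mem_singleton_self y))

theorem mem_of_forall_subset_notMem_tBadEdges (hG : TetraClosed G) {t : ℕ}
    (hn : 3 + 3 * t < n) {f : Finset (Fin n)} (hf : f.card = 3)
    (hgood : ∀ e ⊆ f, e ∉ tBadEdges G t) : f ∈ G := by
  have hE : ∀ e ∈ f.powersetCard 2, (badApexes G e).card ≤ t := fun e he =>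
    card_badApexes_le (mem_powersetCard.1 he).2 (hgood e (mem_powersetCard.1 he).1)
  obtain ⟨d, hd, hext⟩ := exists_apex_of_card_lt f _ hE
    (by rwa [card_powersetCard, hf])
  exact hG.mem_of_forall_insert_mem hf hd fun e he he2 =>
    hext e (mem_powersetCard.2 ⟨he, he2⟩) fun hde => hd (he hde)

theorem mem_of_subset_mem_tBadEdges (hG : TetraClosed G) {t : ℕ} (hn : 4 + 4 * t < n)
    (hGtriples : ∀ f ∈ G, f.card = 3)
    (hdisj : ∀ e₁ ∈ tBadEdges G t, ∀ e₂ ∈ tBadEdges G t, e₁ ≠ e₂ → Disjoint e₁ e₂)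
    (hcover : ∀ e : Finset (Fin n), e.card = 2 → ∃ f ∈ G, e ⊆ f)
    {f e : Finset (Fin n)} (hf : f.card = 3) (hef : e ⊆ f) (hbad : e ∈ tBadEdges G t) :
    f ∈ G := by
  have he : e.card = 2 := (mem_powersetCard.1 (mem_filter.1 hbad).1).2
  obtain ⟨w, hw, rfl⟩ := exists_eq_insert_iff.2 ⟨hef, by rw [he, hf]⟩
  obtain ⟨g, hgG, heg⟩ := hcover e he
  obtain ⟨d, hd, rfl⟩ := exists_eq_insert_iff.2 ⟨heg, by rw [he, hGtriples g hgG]⟩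
  obtain rfl | hdw := eq_or_ne d w
  · exact hgG
  have hgood : ∀ z ∉ e, ∀ y ∈ e, (badApexes G {z, y}).card ≤ t := fun z hz y hy =>
    card_badApexes_le (card_pair (ne_of_mem_of_not_mem hy hz).symm)
      (pair_notMem_tBadEdges hdisj hbad hy hz)
  have hS : (insert d (insert w e)).card ≤ 4 :=
    (card_insert_le _ _).trans (by have := card_insert_le w e; omega)
  set E : Finset (Finset (Fin n)) :=
    e.image (fun y => {w, y}) ∪ e.image (fun y => {d, y}) with hE_def
  have hE : E.card ≤ 4 := (card_union_le _ _).trans <|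
    (Nat.add_le_add card_image_le card_image_le).trans_eq (by rw [he])
  obtain ⟨x, hxS, hext⟩ := exists_apex_of_card_lt (G := G) (insert d (insert w e)) E
    (by simpa [hE_def, forall_and, or_imp] using ⟨hgood w hw, hgood d hd⟩)
    (by nlinarith [Nat.mul_le_mul_right t hE])
  simp only [mem_insert, not_or] at hxS
  obtain ⟨hxd, hxw, hxe⟩ := hxS
  have hxw' : ∀ y ∈ e, insert x {w, y} ∈ G := fun y hy =>
    hext _ (mem_union_left _ (mem_image_of_mem _ hy))
      (by simp [hxw, (ne_of_mem_of_not_mem hy hxe).symm])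
  have hxd' : ∀ y ∈ e, insert x {d, y} ∈ G := fun y hy =>
    hext _ (mem_union_right _ (mem_image_of_mem _ hy))
      (by simp [hxd, (ne_of_mem_of_not_mem hy hxe).symm])
  have hxe_mem : insert x e ∈ G :=
    hG.insert_mem he hxe (by simp [Ne.symm hxd, hd]) hgG fun y hy => by
      rw [insert_comm]; exact hxd' y hy
  exact hG.insert_mem he hw (by simp [hxw, hxe]) hxe_mem hxw'

end Apexes

/-- Every elementary partition in which every edge is covered by a good triple
is complete: if `n > 4 + 4t`, `G` is tetra-closed, the `t`-bad edges are
pairwise vertex-disjoint, and every edge of `Fin n` is contained in at least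
one triple of `G`, then `G` contains all triples of `Fin n`. -/
theorem elementary_covered_complete (n t : ℕ) (G : Finset (Finset (Fin n)))
    (hGtriples : ∀ f ∈ G, f.card = 3) (hG : TetraClosed G)
    (hn : n > 4 + 4 * t)
    (hdisj : ∀ e₁ ∈ tBadEdges G t, ∀ e₂ ∈ tBadEdges G t, e₁ ≠ e₂ → Disjoint e₁ e₂)
    (hcover : ∀ e : Finset (Fin n), e.card = 2 → ∃ f ∈ G, e ⊆ f) :
    ∀ f : Finset (Fin n), f.card = 3 → f ∈ G := by
  intro f hf
  by_cases hbad : ∃ e ⊆ f, e ∈ tBadEdges G t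
  · obtain ⟨e, hef, he⟩ := hbad
    exact mem_of_subset_mem_tBadEdges hG hn hGtriples hdisj hcover hf hef he
  · exact mem_of_forall_subset_notMem_tBadEdges hG (by omega) hf fun e hef he =>
      hbad ⟨e, hef, he⟩
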